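/- arXiv:2304.01465 — 5 statements merged into one kernel-verified Lean document; each statement's English description precedes it below -/
import Mathlib

section
/- Let ω be a majorant differentiable on (0,1] with ω' non-increasing on (0,1], and let φ be a holomorphic self-map of the unit disk 𝔻. Then the function z ↦ ω(1 - |φ(z)|) is superharmonic on 𝔻, i.e., for every z ∈ 𝔻 and 0 < r < 1 - |z|, ω(1 - |φ(z)|) ≥ (1/2π)∫₀^{2π} ω(1 - |φ(z + re^{iτ})|) dτ. -/
open Metric Real

def IsMajorant (ω : ℝ → ℝ) : Prop :=
  ContinuousOn ω (Set.Ici 0) ∧ MonotoneOn ω (Set.Ici 0) ∧ ω 0 = 0 ∧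
  ∀ s t : ℝ, 0 < s → s ≤ t → ω t / t ≤ ω s / s

/-!
Since `ω'` is non-increasing, `ω` is concave on `[0, 1]`, so by Jensen's inequality the circle
average of `ω (1 - ‖φ‖)` is at most `ω` of the circle average of `1 - ‖φ‖`. By the mean value
property of `φ`, `‖φ‖` is subharmonic, so the latter average is at most `1 - ‖φ z‖`, and `ω` is
increasing.
-/

open MeasureTheory

theorem AntitoneOn.concaveOn_Icc_of_hasDerivAt {f f' : ℝ → ℝ} {a b : ℝ}
    (hf : ContinuousOn f (Set.Icc a b)) (hf' : ∀ t ∈ Set.Ioo a b, HasDerivAt f (f' t) t)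
    (h_anti : AntitoneOn f' (Set.Ioo a b)) : ConcaveOn ℝ (Set.Icc a b) f := by
  refine AntitoneOn.concaveOn_of_deriv (convex_Icc a b) hf ?_ ?_ <;> rw [interior_Icc]
  · exact fun t ht ↦ (hf' t ht).differentiableAt.differentiableWithinAt
  · intro s hs t ht hst
    rw [(hf' s hs).deriv, (hf' t ht).deriv]
    exact h_anti hs ht hst

theorem norm_circleAverage_le_circleAverage_norm {E : Type*} [NormedAddCommGroup E]
    [NormedSpace ℝ E] (f : ℂ → E) (c : ℂ) (R : ℝ) :
    ‖circleAverage f c R‖ ≤ circleAverage (fun w ↦ ‖f w‖) c R := by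
  rw [circleAverage, circleAverage, norm_smul, smul_eq_mul, Real.norm_of_nonneg (by positivity)]
  gcongr
  exact intervalIntegral.norm_integral_le_integral_norm two_pi_pos.le

theorem DiffContOnCl.norm_le_circleAverage_norm {E : Type*} [NormedAddCommGroup E]
    [NormedSpace ℂ E] [CompleteSpace E] {f : ℂ → E} {c : ℂ} {R : ℝ}
    (hf : DiffContOnCl ℂ f (ball c |R|)) :
    ‖f c‖ ≤ Real.circleAverage (fun w ↦ ‖f w‖) c R :=
  hf.circleAverage ▸ norm_circleAverage_le_circleAverage_norm f c R

theorem DiffContOnCl.circleAverage_const_sub_norm_le {E : Type*} [NormedAddCommGroup E]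
    [NormedSpace ℂ E] [CompleteSpace E] {f : ℂ → E} {c : ℂ} {R : ℝ}
    (hf : DiffContOnCl ℂ f (ball c |R|)) (hfi : CircleIntegrable (fun w ↦ ‖f w‖) c R) (a : ℝ) :
    Real.circleAverage (fun w ↦ a - ‖f w‖) c R ≤ a - ‖f c‖ := by
  rw [circleAverage_fun_sub (circleIntegrable_const a c R) hfi, circleAverage_const]
  linarith [hf.norm_le_circleAverage_norm]

theorem ConcaveOn.le_map_circleAverage {s : Set ℝ} {g : ℝ → ℝ} {f : ℂ → ℝ} {c : ℂ} {R : ℝ}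
    (hg : ConcaveOn ℝ s g) (hgc : ContinuousOn g s) (hsc : IsClosed s)
    (hfs : ∀ w ∈ sphere c |R|, f w ∈ s) (hfi : CircleIntegrable f c R)
    (hgi : CircleIntegrable (g ∘ f) c R) :
    circleAverage (g ∘ f) c R ≤ g (circleAverage f c R) := by
  have : IsFiniteMeasure (volume.restrict (Set.uIoc 0 (2 * π))) :=
    isFiniteMeasure_restrict.mpr (by simp [Set.uIoc_of_le two_pi_pos.le, ENNReal.mul_eq_top])
  have : NeZero (volume.restrict (Set.uIoc 0 (2 * π))) := ⟨by simp⟩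
  rw [circleAverage_eq_intervalAverage, circleAverage_eq_intervalAverage]
  exact hg.le_map_average hgc hsc
    (Filter.Eventually.of_forall fun θ ↦ hfs _ (circleMap_mem_sphere' c R θ)) hfi.def' hgi.def'

theorem stmt5_general (ω ω' : ℝ → ℝ) (hm : IsMajorant ω)
    (hd : ∀ t ∈ Set.Ioc (0:ℝ) 1, HasDerivAt ω (ω' t) t)
    (hanti : ∀ s ∈ Set.Ioc (0:ℝ) 1, ∀ t ∈ Set.Ioc (0:ℝ) 1, s ≤ t → ω' t ≤ ω' s)
    (φ : ℂ → ℂ) (hφ : DifferentiableOn ℂ φ (ball (0:ℂ) 1))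
    (hmaps : ∀ z ∈ ball (0:ℂ) 1, φ z ∈ ball (0:ℂ) 1)
    (z : ℂ) (r : ℝ) (hr : 0 < r) (hr1 : r < 1 - ‖z‖) :
    (1 / (2 * π)) *
        ∫ τ in (0:ℝ)..(2 * π), ω (1 - ‖φ (z + (r : ℂ) * Complex.exp (τ * Complex.I))‖)
      ≤ ω (1 - ‖φ z‖) := by
  obtain ⟨hωc, hωmono, -, -⟩ := hm
  have hdisk : closedBall z r ⊆ ball (0:ℂ) 1 :=
    closedBall_subset_ball' (by rw [dist_zero_right]; linarith)
  have hsphere : sphere z |r| ⊆ closedBall z r := by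
    rw [abs_of_pos hr]; exact sphere_subset_closedBall
  set u : ℂ → ℝ := fun w ↦ 1 - ‖φ w‖
  have hu : ∀ w ∈ closedBall z r, u w ∈ Set.Icc 0 1 := fun w hw ↦ by
    have := mem_ball_zero_iff.mp (hmaps w (hdisk hw))
    exact ⟨by linarith, by linarith [norm_nonneg (φ w)]⟩
  have huc : ContinuousOn u (closedBall z r) :=
    continuousOn_const.sub (hφ.continuousOn.mono hdisk).norm
  have hωc01 : ContinuousOn ω (Set.Icc 0 1) := hωc.mono Set.Icc_subset_Ici_self
  have hconc : ConcaveOn ℝ (Set.Icc 0 1) ω :=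
    AntitoneOn.concaveOn_Icc_of_hasDerivAt hωc01 (fun t ht ↦ hd t (Set.Ioo_subset_Ioc_self ht))
      fun s hs t ht hst ↦ hanti s (Set.Ioo_subset_Ioc_self hs) t (Set.Ioo_subset_Ioc_self ht) hst
  have hjensen : circleAverage (ω ∘ u) z r ≤ ω (circleAverage u z r) :=
    hconc.le_map_circleAverage hωc01 isClosed_Icc (fun w hw ↦ hu w (hsphere hw))
      (huc.mono hsphere).circleIntegrable' ((hωc01.comp huc hu).mono hsphere).circleIntegrable'
  have hφr : DiffContOnCl ℂ φ (ball z |r|) := by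
    rw [abs_of_pos hr]
    exact (hφ.mono (closure_ball_subset_closedBall.trans hdisk)).diffContOnCl
  have hsub_mean : circleAverage u z r ≤ u z := hφr.circleAverage_const_sub_norm_le
    (hφ.continuousOn.mono (hsphere.trans hdisk)).norm.circleIntegrable' 1
  calc (1 / (2 * π)) *
        ∫ τ in (0:ℝ)..(2 * π), ω (1 - ‖φ (z + (r : ℂ) * Complex.exp (τ * Complex.I))‖)
      = circleAverage (ω ∘ u) z r := by rw [circleAverage_def, smul_eq_mul, one_div]; rfl
    _ ≤ ω (circleAverage u z r) := hjensen
    _ ≤ ω (u z) := hωmono (circleAverage_nonneg_of_nonneg fun w hw ↦ (hu w (hsphere hw)).1)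
        (hu z (mem_closedBall_self hr.le)).1 hsub_mean

theorem stmt5 (ω ω' : ℝ → ℝ) (hm : IsMajorant ω)
    (hd : ∀ t ∈ Set.Ioc (0:ℝ) 1, HasDerivAt ω (ω' t) t)
    (hanti : ∀ s ∈ Set.Ioc (0:ℝ) 1, ∀ t ∈ Set.Ioc (0:ℝ) 1, s ≤ t → ω' t ≤ ω' s)
    (φ : ℂ → ℂ) (hφ : DifferentiableOn ℂ φ (ball (0:ℂ) 1))
    (hmaps : ∀ z ∈ ball (0:ℂ) 1, φ z ∈ ball (0:ℂ) 1)
    (z : ℂ) (hz : z ∈ ball (0:ℂ) 1) (r : ℝ) (hr : 0 < r) (hr1 : r < 1 - ‖z‖) :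
    (1 / (2 * π)) *
        ∫ τ in (0:ℝ)..(2 * π), ω (1 - ‖φ (z + (r : ℂ) * Complex.exp (τ * Complex.I))‖)
      ≤ ω (1 - ‖φ z‖) :=
  stmt5_general ω ω' hm hd hanti φ hφ hmaps z r hr hr1
end

section
/- Let K ≥ 1 and let f be a harmonic K-quasiregular mapping of 𝔻 into ℂ. Then for every z ∈ 𝔻 and every δ with 0 < δ < 1 - |z|, one has 𝓜_f(z) ≤ 2K(M_{z,δ} - |f(z)|)/δ, where M_{z,δ} = sup{|f(w)| : |w - z| < δ}. -/
open Metric ComplexConjugate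

/-!
Choose `c` with `‖c‖ = 1` and `c f(z) = ‖f(z)‖`. The holomorphic function `A = c h + c̄ g` has
`Re A = Re (c f) ≤ ‖f‖ ≤ M` on `ball z δ` and `Re A(z) = ‖f(z)‖`, so the Schwarz–Pick lemma for a
half-plane gives `‖A'(z)‖ ≤ 2 (M - ‖f(z)‖) / δ`. Since `‖h'‖ - ‖g'‖ ≤ ‖A'‖`, and quasiregularity
gives `‖h'‖ + ‖g'‖ ≤ K (‖h'‖ - ‖g'‖)`, the bound follows.
-/

namespace Complex

lemma norm_sub_lt_norm_add_conj {w a : ℂ} (hw : 0 < w.re) (ha : 0 < a.re) :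
    ‖w - a‖ < ‖w + conj a‖ := by
  rw [norm_def, norm_def]
  refine Real.sqrt_lt_sqrt (normSq_nonneg _) ?_
  simp only [normSq_apply, sub_re, sub_im, add_re, add_im, conj_re, conj_im]
  nlinarith

/-- The Cayley map `w ↦ (w - a) / (w + conj a)` sends the right half-plane into the unit disc and
`a` to `0`, so this follows from the Schwarz lemma. -/
lemma norm_deriv_le_of_re_pos {B : ℂ → ℂ} {z : ℂ} {δ : ℝ} (hδ : 0 < δ)
    (hB : DifferentiableOn ℂ B (ball z δ)) (hre : ∀ w ∈ ball z δ, 0 < (B w).re) :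
    ‖deriv B z‖ ≤ 2 * (B z).re / δ := by
  set a := B z
  have ha : 0 < a.re := hre z (mem_ball_self hδ)
  have hden : ∀ w ∈ ball z δ, B w + conj a ≠ 0 := fun w hw h0 => by
    have := norm_sub_lt_norm_add_conj (hre w hw) ha
    rw [h0, norm_zero] at this
    exact (norm_nonneg _).not_gt this
  set G : ℂ → ℂ := fun w => (B w - a) / (B w + conj a)
  have hG : DifferentiableOn ℂ G (ball z δ) :=
    (hB.sub_const a).div (hB.add_const _) hden
  have hmaps : Set.MapsTo G (ball z δ) (closedBall (G z) 1) := fun w hw => by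
    have hpos : 0 < ‖B w + conj a‖ := norm_pos_iff.mpr (hden w hw)
    simp only [G, a, sub_self, zero_div, mem_closedBall, dist_zero_right, norm_div]
    exact (div_lt_one hpos).mpr (norm_sub_lt_norm_add_conj (hre w hw) ha) |>.le
  have hGz : HasDerivAt G (deriv B z / (2 * a.re : ℝ)) z := by
    have hBz := (hB.differentiableAt (isOpen_ball.mem_nhds (mem_ball_self hδ))).hasDerivAt
    refine ((hBz.sub_const a).div (hBz.add_const (conj a))
      (hden z (mem_ball_self hδ))).congr_deriv ?_
    have h2a : ((2 * a.re : ℝ) : ℂ) ≠ 0 := by exact_mod_cast (by positivity : 2 * a.re ≠ 0)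
    rw [sub_self, zero_mul, sub_zero, add_conj, pow_two, mul_div_mul_right _ _ h2a]
  have := norm_deriv_le_div_of_mapsTo_ball hG hmaps hδ
  rw [hGz.deriv, norm_div, norm_real, Real.norm_of_nonneg (by positivity),
    div_le_div_iff₀ (by positivity) hδ] at this
  rw [le_div_iff₀ hδ]
  linarith

lemma norm_deriv_le_of_re_le {A : ℂ → ℂ} {z : ℂ} {δ M : ℝ} (hδ : 0 < δ)
    (hA : DifferentiableOn ℂ A (ball z δ)) (hre : ∀ w ∈ ball z δ, (A w).re ≤ M) :
    ‖deriv A z‖ ≤ 2 * (M - (A z).re) / δ := by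
  suffices δ * ‖deriv A z‖ / 2 + (A z).re ≤ M by
    rw [le_div_iff₀ hδ]; linarith
  refine le_of_forall_gt_imp_ge_of_dense fun M' hM' => ?_
  have hB := norm_deriv_le_of_re_pos (B := fun w => (M' : ℂ) - A w) hδ
    ((differentiableOn_const (M' : ℂ)).sub hA) fun w hw => by simpa using (hre w hw).trans_lt hM'
  have hderiv : deriv (fun w => (M' : ℂ) - A w) z = -deriv A z :=
    deriv_const_sub _
  rw [hderiv, norm_neg, sub_re, ofReal_re, le_div_iff₀ hδ] at hB
  linarith

lemma norm_deriv_sub_norm_deriv_le {h g : ℂ → ℂ} {z : ℂ} {δ M : ℝ} (hδ : 0 < δ)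
    (hh : DifferentiableOn ℂ h (ball z δ)) (hg : DifferentiableOn ℂ g (ball z δ))
    (hM : ∀ w ∈ ball z δ, ‖h w + conj (g w)‖ ≤ M) :
    ‖deriv h z‖ - ‖deriv g z‖ ≤ 2 * (M - ‖h z + conj (g z)‖) / δ := by
  obtain ⟨c, hc, hcz⟩ := exists_norm_eq_mul_self (h z + conj (g z))
  have hre : ∀ w, (c * h w + conj c * g w).re = (c * (h w + conj (g w))).re := fun w => by
    simp only [mul_add, add_re, mul_re, conj_re, conj_im]
    ring
  have hA := norm_deriv_le_of_re_le (A := fun w => c * h w + conj c * g w) (M := M) hδ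
    ((hh.const_mul c).add (hg.const_mul (conj c))) fun w hw => by
      rw [hre]
      refine (re_le_norm _).trans ?_
      rw [norm_mul, hc, one_mul]
      exact hM w hw
  have hz := mem_ball_self hδ (x := z)
  have hh' := (hh.differentiableAt (isOpen_ball.mem_nhds hz)).hasDerivAt
  have hg' := (hg.differentiableAt (isOpen_ball.mem_nhds hz)).hasDerivAt
  have hA' : HasDerivAt (fun w => c * h w + conj c * g w)
      (c * deriv h z + conj c * deriv g z) z :=
    (hh'.const_mul c).add (hg'.const_mul (conj c))
  rw [hA'.deriv, hre, ← hcz, ofReal_re] at hA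
  refine le_trans ?_ hA
  simpa [hc] using norm_sub_norm_le (c * deriv h z) (-(conj c * deriv g z))

end Complex

lemma add_le_mul_sub_of_sq_le {a b K : ℝ} (ha : 0 ≤ a) (hb : 0 ≤ b)
    (h : (a + b) ^ 2 ≤ K * (a ^ 2 - b ^ 2)) : a + b ≤ K * (a - b) := by
  rcases (add_nonneg ha hb).eq_or_lt with h0 | hpos
  · obtain ⟨rfl, rfl⟩ : a = 0 ∧ b = 0 := ⟨by linarith, by linarith⟩
    simp
  · refine le_of_mul_le_mul_right ?_ hpos
    nlinarith

theorem stmt7_general (K : ℝ) (hK : 1 ≤ K) (h g : ℂ → ℂ)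
    (hh : DifferentiableOn ℂ h (ball (0:ℂ) 1))
    (hg : DifferentiableOn ℂ g (ball (0:ℂ) 1))
    (hqr : ∀ z ∈ ball (0:ℂ) 1,
      (‖deriv h z‖ + ‖deriv g z‖) ^ 2 ≤ K * (‖deriv h z‖ ^ 2 - ‖deriv g z‖ ^ 2)) :
    ∀ z ∈ ball (0:ℂ) 1, ∀ δ : ℝ, 0 < δ → δ < 1 - ‖z‖ →
      ‖deriv h z‖ + ‖deriv g z‖ ≤
        2 * K * (sSup ((fun w => ‖h w + conj (g w)‖) '' ball z δ)
          - ‖h z + conj (g z)‖) / δ := by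
  intro z hz δ hδ hδz
  have hsub : closedBall z δ ⊆ ball 0 1 :=
    closedBall_subset_ball' (by rw [dist_zero_right]; linarith)
  have hf : ContinuousOn (fun w => h w + conj (g w)) (ball 0 1) :=
    hh.continuousOn.add (Complex.continuous_conj.comp_continuousOn hg.continuousOn)
  have hbdd := ((isCompact_closedBall z δ).bddAbove_image (hf.mono hsub).norm).mono
    (Set.image_mono ball_subset_closedBall)
  have hdiff := Complex.norm_deriv_sub_norm_deriv_le hδ
    (hh.mono (ball_subset_closedBall.trans hsub)) (hg.mono (ball_subset_closedBall.trans hsub))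
    fun w hw => le_csSup hbdd (Set.mem_image_of_mem _ hw)
  calc ‖deriv h z‖ + ‖deriv g z‖ ≤ K * (‖deriv h z‖ - ‖deriv g z‖) :=
        add_le_mul_sub_of_sq_le (norm_nonneg _) (norm_nonneg _) (hqr z hz)
    _ ≤ K * (2 * (sSup ((fun w => ‖h w + conj (g w)‖) '' ball z δ)
          - ‖h z + conj (g z)‖) / δ) := by gcongr
    _ = _ := by ring

theorem stmt7 (K : ℝ) (hK : 1 ≤ K) (h g : ℂ → ℂ)
    (hh : DifferentiableOn ℂ h (ball (0:ℂ) 1))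
    (hg : DifferentiableOn ℂ g (ball (0:ℂ) 1))
    (hJ : ∀ z ∈ ball (0:ℂ) 1, ‖deriv g z‖ < ‖deriv h z‖)
    (hqr : ∀ z ∈ ball (0:ℂ) 1,
      (‖deriv h z‖ + ‖deriv g z‖) ^ 2 ≤ K * (‖deriv h z‖ ^ 2 - ‖deriv g z‖ ^ 2)) :
    ∀ z ∈ ball (0:ℂ) 1, ∀ δ : ℝ, 0 < δ → δ < 1 - ‖z‖ →
      ‖deriv h z‖ + ‖deriv g z‖ ≤
        2 * K * (sSup ((fun w => ‖h w + conj (g w)‖) '' ball z δ)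
          - ‖h z + conj (g z)‖) / δ :=
  stmt7_general K hK h g hh hg hqr
end

section
/- Let ω be a majorant and let z = re^{iθ} ∈ 𝔻 with r ≥ 1/4. Then (1/2π)∫₀^{2π} P(z, e^{iτ}) ω(|e^{iτ} - e^{iθ}|) dτ ≤ (2/π)ω(1 - r) + 2π(1 - r)∫_{1-r}^π ω(t)/t² dt, where P(z, e^{iτ}) = (1 - |z|²)/|e^{iτ} - z|² is the Poisson kernel. -/
/-!
Rotating by `θ` and using that the integrand is `2π`-periodic and even in `u = τ - θ`, the
left-hand side is `(1/π) ∫₀^π P(r, e^{iu}) ω(|e^{iu} - 1|) du`, and `|e^{iu} - 1| ≤ u`.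
With `|e^{iu} - r|² = (1 - r)² + 2r(1 - cos u)`: on `[0, 1 - r]` the kernel is at most
`(1 + r)/(1 - r) ≤ 2/(1 - r)`, giving `2 ω(1 - r)`; on `[1 - r, π]` the bound
`cos u ≤ 1 - 2u²/π²` together with `4r ≥ 1` gives `|e^{iu} - r|² ≥ u²/π²`, so the kernel is at
most `2(1 - r)π²/u²`.
-/

open Real

open MeasureTheory

namespace IsMajorant

variable {ω : ℝ → ℝ}

lemma monotoneOn (hω : IsMajorant ω) : MonotoneOn ω (Set.Ici 0) := hω.2.1

lemma nonneg (hω : IsMajorant ω) {t : ℝ} (ht : 0 ≤ t) : 0 ≤ ω t :=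
  hω.2.2.1 ▸ hω.monotoneOn Set.self_mem_Ici ht ht

lemma intervalIntegrable_div_sq (hω : IsMajorant ω) {a b : ℝ} (ha : 0 < a) (hab : a ≤ b) :
    IntervalIntegrable (fun t => ω t / t ^ 2) volume a b := by
  have hpos : ∀ t ∈ Set.Icc a b, 0 < t := fun t ht => ha.trans_le ht.1
  refine ContinuousOn.intervalIntegrable ?_
  rw [Set.uIcc_of_le hab]
  exact (hω.1.mono fun t ht => (hpos t ht).le).div (continuousOn_pow 2)
    fun t ht => (pow_pos (hpos t ht) 2).ne'

end IsMajorant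

lemma norm_exp_mul_I_sub_ofReal_sq (u a : ℝ) :
    ‖Complex.exp (u * Complex.I) - a‖ ^ 2 = (1 - a) ^ 2 + 2 * a * (1 - cos u) := by
  rw [Complex.sq_norm, Complex.normSq_apply]
  simp only [Complex.exp_mul_I, ← Complex.ofReal_cos, ← Complex.ofReal_sin, Complex.sub_re,
    Complex.add_re, Complex.ofReal_re, Complex.mul_re, Complex.I_re, Complex.I_im,
    Complex.ofReal_im, Complex.sub_im, Complex.add_im, Complex.mul_im]
  nlinarith [sin_sq_add_cos_sq u]

lemma norm_exp_neg_mul_I_sub_ofReal (u a : ℝ) :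
    ‖Complex.exp ((-u : ℝ) * Complex.I) - a‖ = ‖Complex.exp (u * Complex.I) - a‖ :=
  (sq_eq_sq₀ (norm_nonneg _) (norm_nonneg _)).1 <| by
    rw [norm_exp_mul_I_sub_ofReal_sq, norm_exp_mul_I_sub_ofReal_sq, cos_neg]

lemma norm_exp_mul_I_sub_mul_exp_mul_I (τ θ : ℝ) (c : ℂ) :
    ‖Complex.exp (τ * Complex.I) - c * Complex.exp (θ * Complex.I)‖ =
      ‖Complex.exp ((τ - θ : ℝ) * Complex.I) - c‖ := by
  rw [← one_mul ‖_ - c‖, ← Complex.norm_exp_ofReal_mul_I θ, ← norm_mul, mul_sub,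
    ← Complex.exp_add]
  push_cast
  ring_nf

lemma norm_exp_mul_I_sub_one_le {u : ℝ} (hu : 0 ≤ u) : ‖Complex.exp (u * Complex.I) - 1‖ ≤ u := by
  simpa [mul_comm, abs_of_nonneg hu] using Real.norm_exp_I_mul_ofReal_sub_one_le (x := u)

lemma sq_div_pi_sq_le_norm_exp_mul_I_sub_ofReal_sq {a u : ℝ} (ha : 1 / 4 ≤ a) (hu : |u| ≤ π) :
    u ^ 2 / π ^ 2 ≤ ‖Complex.exp (u * Complex.I) - a‖ ^ 2 := by
  have hcos := cos_le_one_sub_mul_cos_sq hu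
  have hπ : 0 < π ^ 2 := by positivity
  rw [norm_exp_mul_I_sub_ofReal_sq, div_le_iff₀ hπ]
  have hπu : 2 / π ^ 2 * u ^ 2 * π ^ 2 = 2 * u ^ 2 := by field_simp
  have ha' : (0 : ℝ) ≤ 2 * a * π ^ 2 := by positivity
  nlinarith [sq_nonneg (1 - a), mul_le_mul_of_nonneg_left hcos ha']

lemma sq_one_sub_le_norm_exp_mul_I_sub_ofReal_sq (u : ℝ) {a : ℝ} (ha : 0 ≤ a) :
    (1 - a) ^ 2 ≤ ‖Complex.exp (u * Complex.I) - a‖ ^ 2 := by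
  rw [norm_exp_mul_I_sub_ofReal_sq]
  nlinarith [cos_le_one u]

/-- The Poisson kernel `P(z, e^{iu})` of the unit disc at the real point `z = r`. -/
noncomputable def circlePoissonKernel (r u : ℝ) : ℝ :=
  (1 - r ^ 2) / ‖Complex.exp (u * Complex.I) - r‖ ^ 2

namespace circlePoissonKernel

variable {r : ℝ}

lemma neg (u : ℝ) : circlePoissonKernel r (-u) = circlePoissonKernel r u := by
  rw [circlePoissonKernel, circlePoissonKernel, norm_exp_neg_mul_I_sub_ofReal]

lemma continuous (hr0 : 0 ≤ r) (hr1 : r < 1) : Continuous (circlePoissonKernel r) :=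
  continuous_const.div (by fun_prop) fun u =>
    ((pow_pos (sub_pos.2 hr1) 2).trans_le (sq_one_sub_le_norm_exp_mul_I_sub_ofReal_sq u hr0)).ne'

lemma le_two_div_one_sub (u : ℝ) (hr0 : 0 ≤ r) (hr1 : r < 1) :
    circlePoissonKernel r u ≤ 2 / (1 - r) := by
  have h1r : 0 < 1 - r := sub_pos.2 hr1
  calc circlePoissonKernel r u ≤ (1 - r ^ 2) / (1 - r) ^ 2 :=
        div_le_div_of_nonneg_left (by nlinarith) (by positivity)
          (sq_one_sub_le_norm_exp_mul_I_sub_ofReal_sq u hr0)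
    _ = (1 + r) / (1 - r) := by field_simp; ring
    _ ≤ 2 / (1 - r) := by gcongr; linarith

lemma le_mul_pi_sq_div_sq {u : ℝ} (hr : 1 / 4 ≤ r) (hr1 : r ≤ 1) (hu0 : u ≠ 0) (hu : |u| ≤ π) :
    circlePoissonKernel r u ≤ 2 * (1 - r) * π ^ 2 / u ^ 2 := by
  calc circlePoissonKernel r u ≤ (1 - r ^ 2) / (u ^ 2 / π ^ 2) :=
        div_le_div_of_nonneg_left (by nlinarith) (by positivity)
          (sq_div_pi_sq_le_norm_exp_mul_I_sub_ofReal_sq hr hu)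
    _ = (1 - r ^ 2) * π ^ 2 / u ^ 2 := by field_simp
    _ ≤ 2 * (1 - r) * π ^ 2 / u ^ 2 := by gcongr; nlinarith

end circlePoissonKernel

section IntervalIntegral

variable {E : Type*} [NormedAddCommGroup E] [NormedSpace ℝ E] {f : ℝ → E}

lemma Function.Periodic.intervalIntegral_comp_sub_eq {T : ℝ} (hf : Function.Periodic f T)
    (a b θ : ℝ) : ∫ τ in a..a + T, f (τ - θ) = ∫ u in b..b + T, f u := by
  rw [intervalIntegral.integral_comp_sub_right, add_sub_right_comm, hf.intervalIntegral_add_eq]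

lemma Function.Even.intervalIntegral_neg_eq_two_nsmul (hf : f.Even) {a : ℝ}
    (hfi : IntervalIntegrable f volume (-a) a) :
    ∫ u in -a..a, f u = 2 • ∫ u in 0..a, f u := by
  have h0 : (0 : ℝ) ∈ Set.uIcc (-a) a := by
    rcases le_total 0 a with h | h <;> simp [h]
  rw [← intervalIntegral.integral_add_adjacent_intervals
      (hfi.mono_set (Set.uIcc_subset_uIcc Set.left_mem_uIcc h0))
      (hfi.mono_set (Set.uIcc_subset_uIcc h0 Set.right_mem_uIcc)),
    two_nsmul]
  congr 1
  simpa [hf _] using (intervalIntegral.integral_comp_neg (a := 0) (b := a) f).symm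

end IntervalIntegral

/-- The integrand of the theorem, as a function of `u = τ - θ`. -/
noncomputable def poissonMajorantIntegrand (ω : ℝ → ℝ) (r u : ℝ) : ℝ :=
  circlePoissonKernel r u * ω ‖Complex.exp (u * Complex.I) - 1‖

namespace poissonMajorantIntegrand

lemma periodic (ω : ℝ → ℝ) (r : ℝ) :
    Function.Periodic (poissonMajorantIntegrand ω r) (2 * π) := by
  intro u
  have h : Complex.exp ((u + 2 * π : ℝ) * Complex.I) = Complex.exp (u * Complex.I) := by
    push_cast
    exact Complex.exp_mul_I_periodic u
  simp only [poissonMajorantIntegrand, circlePoissonKernel, h]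

lemma even (ω : ℝ → ℝ) (r : ℝ) : (poissonMajorantIntegrand ω r).Even := by
  intro u
  have h := norm_exp_neg_mul_I_sub_ofReal u 1
  rw [Complex.ofReal_one] at h
  rw [poissonMajorantIntegrand, poissonMajorantIntegrand, circlePoissonKernel.neg, h]

variable {ω : ℝ → ℝ} {r : ℝ}

lemma continuous (hω : IsMajorant ω) (hr0 : 0 ≤ r) (hr1 : r < 1) :
    Continuous (poissonMajorantIntegrand ω r) :=
  (circlePoissonKernel.continuous hr0 hr1).mul <|
    hω.1.comp_continuous (by fun_prop) fun _ => norm_nonneg _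

lemma le_of_le_one_sub (hω : IsMajorant ω) (hr0 : 0 ≤ r) (hr1 : r < 1) {u : ℝ} (hu0 : 0 ≤ u)
    (hu : u ≤ 1 - r) : poissonMajorantIntegrand ω r u ≤ 2 / (1 - r) * ω (1 - r) :=
  mul_le_mul (circlePoissonKernel.le_two_div_one_sub u hr0 hr1)
    (hω.monotoneOn (norm_nonneg _) (hu0.trans hu) ((norm_exp_mul_I_sub_one_le hu0).trans hu))
    (hω.nonneg (norm_nonneg _)) (div_pos two_pos (sub_pos.2 hr1)).le

lemma le_mul_div_sq (hω : IsMajorant ω) (hr : 1 / 4 ≤ r) (hr1 : r ≤ 1) {u : ℝ} (hu0 : 0 < u)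
    (hu : u ≤ π) : poissonMajorantIntegrand ω r u ≤ 2 * (1 - r) * π ^ 2 * (ω u / u ^ 2) := by
  have h1r := sub_nonneg.2 hr1
  calc poissonMajorantIntegrand ω r u ≤ 2 * (1 - r) * π ^ 2 / u ^ 2 * ω u :=
        mul_le_mul
          (circlePoissonKernel.le_mul_pi_sq_div_sq hr hr1 hu0.ne' (by rwa [abs_of_pos hu0]))
          (hω.monotoneOn (norm_nonneg _) hu0.le (norm_exp_mul_I_sub_one_le hu0.le))
          (hω.nonneg (norm_nonneg _)) (by positivity)
    _ = 2 * (1 - r) * π ^ 2 * (ω u / u ^ 2) := by ring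

lemma integral_le_of_le_one_sub (hω : IsMajorant ω) (hr0 : 0 ≤ r) (hr1 : r < 1) :
    ∫ u in (0 : ℝ)..(1 - r), poissonMajorantIntegrand ω r u ≤ 2 * ω (1 - r) := by
  have h1r : 0 < 1 - r := sub_pos.2 hr1
  calc ∫ u in (0 : ℝ)..(1 - r), poissonMajorantIntegrand ω r u
      ≤ ∫ _ in (0 : ℝ)..(1 - r), 2 / (1 - r) * ω (1 - r) :=
        intervalIntegral.integral_mono_on h1r.le ((continuous hω hr0 hr1).intervalIntegrable _ _)
          intervalIntegrable_const fun u hu => le_of_le_one_sub hω hr0 hr1 hu.1 hu.2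
    _ = 2 * ω (1 - r) := by
        rw [intervalIntegral.integral_const, sub_zero, smul_eq_mul]
        field_simp

lemma integral_le_mul_integral_div_sq (hω : IsMajorant ω) (hr : 1 / 4 ≤ r) (hr1 : r < 1) :
    ∫ u in (1 - r)..π, poissonMajorantIntegrand ω r u ≤
      2 * (1 - r) * π ^ 2 * ∫ t in (1 - r)..π, ω t / t ^ 2 := by
  have h1r : 0 < 1 - r := sub_pos.2 hr1
  have h1rπ : 1 - r ≤ π := by linarith [pi_gt_three]
  rw [← intervalIntegral.integral_const_mul]
  exact intervalIntegral.integral_mono_on h1rπ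
    ((continuous hω (by linarith) hr1).intervalIntegrable _ _)
    ((hω.intervalIntegrable_div_sq h1r h1rπ).const_mul _)
    fun u hu => le_mul_div_sq hω hr hr1.le (h1r.trans_le hu.1) hu.2

end poissonMajorantIntegrand

theorem stmt11 (ω : ℝ → ℝ) (hm : IsMajorant ω)
    (r θ : ℝ) (hr : 1 / 4 ≤ r) (hr1 : r < 1) :
    (1 / (2 * π)) *
        ∫ τ in (0:ℝ)..(2 * π),
          ((1 - r ^ 2) /
              ‖Complex.exp (τ * Complex.I) - (r : ℂ) * Complex.exp (θ * Complex.I)‖ ^ 2) *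
            ω ‖Complex.exp (τ * Complex.I) - Complex.exp (θ * Complex.I)‖
      ≤ (2 / π) * ω (1 - r) + 2 * π * (1 - r) * ∫ t in (1 - r)..π, ω t / t ^ 2 := by
  have hr0 : 0 ≤ r := by linarith
  set g := poissonMajorantIntegrand ω r
  have hg : Continuous g := poissonMajorantIntegrand.continuous hm hr0 hr1
  have hrot : ∀ τ : ℝ,
      (1 - r ^ 2) / ‖Complex.exp (τ * Complex.I) - r * Complex.exp (θ * Complex.I)‖ ^ 2 *
        ω ‖Complex.exp (τ * Complex.I) - Complex.exp (θ * Complex.I)‖ = g (τ - θ) := fun τ => by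
    rw [norm_exp_mul_I_sub_mul_exp_mul_I, ← one_mul (Complex.exp (θ * Complex.I)),
      norm_exp_mul_I_sub_mul_exp_mul_I, ← Complex.ofReal_one]
    rfl
  have hperiod : ∫ τ in (0 : ℝ)..(2 * π), g (τ - θ) = ∫ u in (-π)..π, g u := by
    have h := (poissonMajorantIntegrand.periodic ω r).intervalIntegral_comp_sub_eq 0 (-π) θ
    rwa [zero_add, show -π + 2 * π = π by ring] at h
  have hsplit : ∫ τ in (0 : ℝ)..(2 * π), g (τ - θ) =
      2 * ((∫ u in (0 : ℝ)..(1 - r), g u) + ∫ u in (1 - r)..π, g u) := by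
    rw [hperiod, (poissonMajorantIntegrand.even ω r).intervalIntegral_neg_eq_two_nsmul
      (hg.intervalIntegrable _ _), intervalIntegral.integral_add_adjacent_intervals
      (hg.intervalIntegrable _ _) (hg.intervalIntegrable _ _), two_nsmul, two_mul]
  calc _ = 1 / π * ((∫ u in (0 : ℝ)..(1 - r), g u) + ∫ u in (1 - r)..π, g u) := by
        simp only [hrot, hsplit]
        field_simp
    _ ≤ 1 / π * (2 * ω (1 - r) + 2 * (1 - r) * π ^ 2 * ∫ t in (1 - r)..π, ω t / t ^ 2) := by
        gcongr
        · exact poissonMajorantIntegrand.integral_le_of_le_one_sub hm hr0 hr1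
        · exact poissonMajorantIntegrand.integral_le_mul_integral_div_sq hm hr hr1
    _ = (2 / π) * ω (1 - r) + 2 * π * (1 - r) * ∫ t in (1 - r)..π, ω t / t ^ 2 := by
        field_simp
end

section
/- Let ω be a majorant satisfying: there is M > 0 with δ∫_δ^π ω(t)/t² dt ≤ Mω(δ) for all δ ∈ (0,π]. If φ : 𝕋 → ℂ is continuous and satisfies |φ(ξ₁) - φ(ξ₂)| ≤ L·ω(|ξ₁ - ξ₂|) on 𝕋, then there is a constant M' > 0 (depending only on M and L) such that for every z ∈ 𝔻 with z ≠ 0, |φ(z/|z|) - P[φ](z)| ≤ M'·ω(1 - |z|). -/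
/-!
Write `ζ = z / ‖z‖ = e^{iθ}` and `δ = 1 - ‖z‖`. The Poisson kernel `P(z, ·)` is nonnegative with
mean one, so `φ ζ - P[φ](z)` is the kernel average of `φ ζ - φ(e^{iτ})`, whose norm is at most
`L ω ‖ζ - e^{iτ}‖`. Put `τ = θ + t` with `|t| ≤ π`. Near `ζ` (`|t| ≤ δ`) the kernel is at most
`2 / δ` and `ω ‖ζ - e^{iτ}‖ ≤ ω δ`. Away from `ζ`, `‖e^{iτ} - z‖ ≥ ‖ζ - e^{iτ}‖ / 2 ≥ |t| / π`
gives `P(z, τ) ≤ 2π²δ / t²`, and that part is controlled by `δ ∫_δ^π ω t / t² dt ≤ M ω δ`.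
-/

open Metric Real

/-- The Poisson integral of a (complex-valued) boundary function `φ`. -/
noncomputable def poissonC (φ : ℂ → ℂ) (z : ℂ) : ℂ :=
  (1 / (2 * π) : ℝ) •
    ∫ τ in (0:ℝ)..(2 * π),
      ((1 - ‖z‖ ^ 2) / ‖Complex.exp (τ * Complex.I) - z‖ ^ 2 : ℝ) •
        φ (Complex.exp (τ * Complex.I))

noncomputable def diskPoissonKernel (z : ℂ) (τ : ℝ) : ℝ :=
  (1 - ‖z‖ ^ 2) / ‖Complex.exp (τ * Complex.I) - z‖ ^ 2

section DiskPoissonKernel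

variable {z : ℂ}

lemma one_sub_norm_le_norm_exp_mul_I_sub (τ : ℝ) (z : ℂ) :
    1 - ‖z‖ ≤ ‖Complex.exp (τ * Complex.I) - z‖ := by
  simpa using norm_sub_norm_le (Complex.exp (τ * Complex.I)) z

lemma exp_mul_I_sub_ne_zero (hz : ‖z‖ < 1) (τ : ℝ) : Complex.exp (τ * Complex.I) - z ≠ 0 :=
  norm_pos_iff.1 (by linarith [one_sub_norm_le_norm_exp_mul_I_sub τ z])

lemma continuous_diskPoissonKernel (hz : ‖z‖ < 1) : Continuous (diskPoissonKernel z) :=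
  continuous_const.div (by fun_prop) fun τ ↦
    pow_ne_zero 2 (norm_ne_zero_iff.2 (exp_mul_I_sub_ne_zero hz τ))

lemma diskPoissonKernel_nonneg (hz : ‖z‖ ≤ 1) (τ : ℝ) : 0 ≤ diskPoissonKernel z τ :=
  div_nonneg (by nlinarith [norm_nonneg z]) (sq_nonneg _)

lemma diskPoissonKernel_le (hz : ‖z‖ ≤ 1) {τ d : ℝ} (hd : 0 < d)
    (hdτ : d ≤ ‖Complex.exp (τ * Complex.I) - z‖) :
    diskPoissonKernel z τ ≤ 2 * (1 - ‖z‖) / d ^ 2 :=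
  div_le_div₀ (by nlinarith [norm_nonneg z]) (by nlinarith [norm_nonneg z]) (by positivity)
    (pow_le_pow_left₀ hd.le hdτ 2)

theorem integral_diskPoissonKernel (hz : ‖z‖ < 1) :
    ∫ τ in (0:ℝ)..2 * π, diskPoissonKernel z τ = 2 * π := by
  have h := DiffContOnCl.circleAverage_poissonKernel_smul' (f := fun _ : ℂ ↦ (1 : ℂ)) (c := 0)
    diffContOnCl_const (mem_ball_zero_iff.2 hz)
  simp only [Real.circleAverage_def, circleMap, sub_zero, Complex.ofReal_one, one_mul, zero_add,
    Complex.norm_exp_ofReal_mul_I, one_pow, Complex.real_smul, mul_one,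
    intervalIntegral.integral_ofReal, ← Complex.ofReal_mul, Complex.ofReal_eq_one] at h
  rw [inv_mul_eq_one₀ (by positivity)] at h
  exact h.symm

end DiskPoissonKernel

lemma ContinuousOn.continuous_comp_exp_mul_I {φ : ℂ → ℂ} (hφ : ContinuousOn φ (sphere 0 1)) :
    Continuous fun τ : ℝ ↦ φ (Complex.exp (τ * Complex.I)) :=
  hφ.comp_continuous (by fun_prop) fun τ ↦ by simp

section PoissonIntegral

variable {z : ℂ} {φ : ℂ → ℂ}

lemma sub_poissonC_eq (hz : ‖z‖ < 1) (hφ : ContinuousOn φ (sphere 0 1)) (c : ℂ) :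
    c - poissonC φ z = (1 / (2 * π) : ℝ) • ∫ τ in (0:ℝ)..2 * π,
      diskPoissonKernel z τ • (c - φ (Complex.exp (τ * Complex.I))) := by
  have hK := continuous_diskPoissonKernel hz
  simp_rw [smul_sub]
  rw [intervalIntegral.integral_sub (f := fun τ ↦ diskPoissonKernel z τ • c)
      (g := fun τ ↦ diskPoissonKernel z τ • φ (Complex.exp (τ * Complex.I)))
      ((hK.smul continuous_const).intervalIntegrable _ _)
      ((hK.smul hφ.continuous_comp_exp_mul_I).intervalIntegrable _ _),
    intervalIntegral.integral_smul_const, integral_diskPoissonKernel hz, smul_sub, smul_smul,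
    one_div_mul_cancel (by positivity), one_smul]
  rfl

lemma norm_sub_poissonC_le (hz : ‖z‖ < 1) (hφ : ContinuousOn φ (sphere 0 1)) {c : ℂ}
    {g : ℝ → ℝ} (hg : Continuous g)
    (hcg : ∀ τ : ℝ, ‖c - φ (Complex.exp (τ * Complex.I))‖ ≤ g τ) :
    ‖c - poissonC φ z‖ ≤ 1 / (2 * π) * ∫ τ in (0:ℝ)..2 * π, diskPoissonKernel z τ * g τ := by
  have hK := continuous_diskPoissonKernel hz
  rw [sub_poissonC_eq hz hφ, norm_smul, Real.norm_of_nonneg (by positivity)]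
  gcongr
  refine (intervalIntegral.norm_integral_le_integral_norm (by positivity)).trans
    (intervalIntegral.integral_mono_on (by positivity) ?_ ((hK.mul hg).intervalIntegrable _ _)
      fun τ _ ↦ ?_)
  · exact (hK.smul (continuous_const.sub hφ.continuous_comp_exp_mul_I)).norm.intervalIntegrable
      _ _
  · rw [norm_smul, Real.norm_of_nonneg (diskPoissonKernel_nonneg hz.le τ)]
    exact mul_le_mul_of_nonneg_left (hcg τ) (diskPoissonKernel_nonneg hz.le τ)

end PoissonIntegral

lemma periodic_exp_ofReal_mul_I :
    Function.Periodic (fun τ : ℝ ↦ Complex.exp (τ * Complex.I)) (2 * π) := fun τ ↦ by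
  push_cast
  exact Complex.exp_mul_I_periodic τ

lemma Function.Periodic.intervalIntegral_eq_integral_comp_add {E : Type*}
    [NormedAddCommGroup E] [NormedSpace ℝ E] {f : ℝ → E} {T : ℝ} (hf : f.Periodic (2 * T)) (θ : ℝ) :
    ∫ τ in (0:ℝ)..2 * T, f τ = ∫ t in -T..T, f (θ + t) := by
  have h := hf.intervalIntegral_add_eq 0 (θ - T)
  rw [zero_add] at h
  rw [h, intervalIntegral.integral_comp_add_left]
  congr 1; ring

lemma integral_le_of_le_near_of_le_far {g F : ℝ → ℝ} {δ a A B : ℝ} (hg : Continuous g)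
    (hF : ContinuousOn F (Set.Icc δ a)) (hδ : 0 ≤ δ) (hδa : δ ≤ a)
    (hnear : ∀ t, |t| ≤ δ → g t ≤ A) (hfar : ∀ t, δ ≤ |t| → |t| ≤ a → g t ≤ B * F |t|) :
    ∫ t in -a..a, g t ≤ 2 * δ * A + 2 * B * ∫ t in δ..a, F t := by
  have hgi : ∀ b c, IntervalIntegrable g MeasureTheory.volume b c :=
    fun _ _ ↦ hg.intervalIntegrable _ _
  have hFi : IntervalIntegrable F MeasureTheory.volume δ a := hF.intervalIntegrable_of_Icc hδa
  have hFabs : IntervalIntegrable (fun t ↦ F |t|) MeasureTheory.volume (-a) (-δ) := by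
    refine ContinuousOn.intervalIntegrable_of_Icc (by linarith)
      (hF.comp continuous_abs.continuousOn fun t ht ↦ ?_)
    rw [Set.mem_Icc, abs_of_nonpos (by linarith [ht.2])]
    exact ⟨by linarith [ht.2], by linarith [ht.1]⟩
  have hleft : ∫ t in -a..-δ, g t ≤ B * ∫ t in δ..a, F t :=
    calc ∫ t in -a..-δ, g t ≤ ∫ t in -a..-δ, B * F |t| :=
          intervalIntegral.integral_mono_on (by linarith) (hgi _ _) (hFabs.const_mul B)
            fun t ht ↦ hfar t (by rw [abs_of_nonpos (by linarith [ht.2])]; linarith [ht.2])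
              (by rw [abs_of_nonpos (by linarith [ht.2])]; linarith [ht.1])
      _ = B * ∫ t in δ..a, F t := by
          rw [intervalIntegral.integral_const_mul, ← intervalIntegral.integral_comp_neg]
          refine congrArg _ (intervalIntegral.integral_congr fun t ht ↦ ?_)
          rw [Set.uIcc_of_le hδa] at ht
          simp only [abs_neg, abs_of_nonneg (hδ.trans ht.1)]
  have hmid : ∫ t in -δ..δ, g t ≤ 2 * δ * A :=
    calc ∫ t in -δ..δ, g t ≤ ∫ _ in -δ..δ, A :=
          intervalIntegral.integral_mono_on (by linarith) (hgi _ _) intervalIntegrable_const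
            fun t ht ↦ hnear t (abs_le.2 ht)
      _ = 2 * δ * A := by simp only [intervalIntegral.integral_const, smul_eq_mul]; ring
  have hright : ∫ t in δ..a, g t ≤ B * ∫ t in δ..a, F t :=
    calc ∫ t in δ..a, g t ≤ ∫ t in δ..a, B * F t :=
          intervalIntegral.integral_mono_on hδa (hgi _ _) (hFi.const_mul B)
            fun t ht ↦ by
              have ht_abs : |t| = t := abs_of_nonneg (hδ.trans ht.1)
              simpa only [ht_abs] using hfar t (ht_abs.symm ▸ ht.1) (ht_abs.symm ▸ ht.2)
      _ = B * ∫ t in δ..a, F t := intervalIntegral.integral_const_mul _ _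
  rw [← intervalIntegral.integral_add_adjacent_intervals (hgi (-a) (-δ)) (hgi (-δ) a),
    ← intervalIntegral.integral_add_adjacent_intervals (hgi (-δ) δ) (hgi δ a)]
  linarith

lemma norm_exp_mul_I_sub_exp_add_mul_I (θ t : ℝ) :
    ‖Complex.exp (θ * Complex.I) - Complex.exp ((θ + t : ℝ) * Complex.I)‖
      = ‖Complex.exp (Complex.I * t) - 1‖ := by
  rw [Complex.ofReal_add, add_mul, Complex.exp_add, ← mul_one_sub, norm_mul,
    Complex.norm_exp_ofReal_mul_I, one_mul, norm_sub_rev, mul_comm]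

lemma two_div_pi_mul_abs_le_norm_exp_I_mul_ofReal_sub_one {t : ℝ} (ht : |t| ≤ π) :
    2 / π * |t| ≤ ‖Complex.exp (Complex.I * t) - 1‖ := by
  have hsin := mul_le_sin (abs_nonneg (t / 2)) (by rw [abs_div, abs_two]; linarith)
  rw [Complex.norm_exp_I_mul_ofReal_sub_one, norm_mul, Real.norm_eq_abs, Real.norm_eq_abs,
    abs_sin_eq_sin_abs_of_abs_le_pi (by rw [abs_div, abs_two]; linarith [pi_pos]), abs_two]
  rw [abs_div, abs_two] at hsin ⊢
  linarith

lemma norm_sub_le_two_mul_norm_sub {ξ ζ z : ℂ} (hξ : ‖ξ‖ = 1) (hζ : ‖ζ‖ = 1)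
    (hz : (‖z‖ : ℂ) * ζ = z) : ‖ξ - ζ‖ ≤ 2 * ‖ξ - z‖ := by
  have hzζ : ‖z - ζ‖ ≤ ‖ξ - z‖ :=
    calc ‖z - ζ‖ = |‖z‖ - ‖ξ‖| := by
          conv_lhs => rw [← hz]
          rw [← sub_one_mul, norm_mul, hζ, mul_one, hξ, ← Complex.ofReal_one,
            ← Complex.ofReal_sub, Complex.norm_real, Real.norm_eq_abs]
      _ ≤ ‖z - ξ‖ := abs_norm_sub_norm_le z ξ
      _ = ‖ξ - z‖ := norm_sub_rev z ξ
  linarith [norm_sub_le_norm_sub_add_norm_sub ξ z ζ]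

lemma abs_div_pi_le_norm_exp_add_mul_I_sub {z : ℂ} {θ t : ℝ}
    (hθ : (‖z‖ : ℂ) * Complex.exp (θ * Complex.I) = z) (ht : |t| ≤ π) :
    |t| / π ≤ ‖Complex.exp ((θ + t : ℝ) * Complex.I) - z‖ := by
  have hchord := norm_sub_le_two_mul_norm_sub (Complex.norm_exp_ofReal_mul_I (θ + t))
    (Complex.norm_exp_ofReal_mul_I θ) hθ
  rw [norm_sub_rev, norm_exp_mul_I_sub_exp_add_mul_I] at hchord
  rw [div_le_iff₀ pi_pos]
  calc |t| = π / 2 * (2 / π * |t|) := by field_simp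
    _ ≤ π / 2 * (2 * ‖Complex.exp ((θ + t : ℝ) * Complex.I) - z‖) :=
      mul_le_mul_of_nonneg_left
        ((two_div_pi_mul_abs_le_norm_exp_I_mul_ofReal_sub_one ht).trans hchord) (by positivity)
    _ = _ := by ring

lemma IsMajorant.nonneg_s13 {ω : ℝ → ℝ} (hω : IsMajorant ω) {t : ℝ} (ht : 0 ≤ t) : 0 ≤ ω t :=
  hω.2.2.1 ▸ hω.2.1 (Set.mem_Ici.2 le_rfl) ht ht

lemma integral_diskPoissonKernel_mul_majorant_le {ω : ℝ → ℝ} (hω : IsMajorant ω) {L : ℝ}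
    (hL : 0 ≤ L) {z : ℂ} (hz : ‖z‖ < 1) {θ : ℝ}
    (hθ : (‖z‖ : ℂ) * Complex.exp (θ * Complex.I) = z) :
    ∫ t in -π..π, diskPoissonKernel z (θ + t) *
        (L * ω ‖Complex.exp (θ * Complex.I) - Complex.exp ((θ + t : ℝ) * Complex.I)‖)
      ≤ 4 * L * ω (1 - ‖z‖) +
          4 * π ^ 2 * L * ((1 - ‖z‖) * ∫ t in (1 - ‖z‖)..π, ω t / t ^ 2) := by
  set δ := 1 - ‖z‖
  have hδ : 0 < δ := by linarith
  have hδπ : δ ≤ π := by linarith [norm_nonneg z, pi_gt_three]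
  have hω_chord : ∀ t, ω ‖Complex.exp (θ * Complex.I) - Complex.exp ((θ + t : ℝ) * Complex.I)‖
      ≤ ω |t| := fun t ↦ by
    rw [norm_exp_mul_I_sub_exp_add_mul_I]
    exact hω.2.1 (norm_nonneg _) (abs_nonneg t)
      (by simpa using Real.norm_exp_I_mul_ofReal_sub_one_le (x := t))
  have hg : Continuous fun t ↦ diskPoissonKernel z (θ + t) *
      (L * ω ‖Complex.exp (θ * Complex.I) - Complex.exp ((θ + t : ℝ) * Complex.I)‖) :=
    ((continuous_diskPoissonKernel hz).comp (continuous_const_add θ)).mul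
      (continuous_const.mul (hω.1.comp_continuous (by fun_prop) fun _ ↦ norm_nonneg _))
  have hF : ContinuousOn (fun t ↦ ω t / t ^ 2) (Set.Icc δ π) :=
    (hω.1.mono fun t ht ↦ hδ.le.trans ht.1).div (continuous_pow 2).continuousOn
      fun t ht ↦ by nlinarith [ht.1]
  refine (integral_le_of_le_near_of_le_far (A := 2 * δ / δ ^ 2 * (L * ω δ))
    (B := 2 * π ^ 2 * δ * L) hg hF hδ.le hδπ (fun t ht ↦ ?_) (fun t ht htπ ↦ ?_)).trans_eq
    (by field_simp; ring)
  · refine mul_le_mul (diskPoissonKernel_le hz.le hδ (one_sub_norm_le_norm_exp_mul_I_sub _ z))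
      (mul_le_mul_of_nonneg_left ((hω_chord t).trans (hω.2.1 (abs_nonneg t) hδ.le ht)) hL)
      (mul_nonneg hL (hω.nonneg_s13 (norm_nonneg _))) (by positivity)
  · have ht0 : 0 < |t| := hδ.trans_le ht
    have hdist := abs_div_pi_le_norm_exp_add_mul_I_sub hθ htπ
    calc _ ≤ 2 * δ / (|t| / π) ^ 2 * (L * ω |t|) :=
          mul_le_mul (diskPoissonKernel_le hz.le (by positivity) hdist)
            (mul_le_mul_of_nonneg_left (hω_chord t) hL)
            (mul_nonneg hL (hω.nonneg_s13 (norm_nonneg _))) (by positivity)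
      _ = 2 * π ^ 2 * δ * L * (ω |t| / |t| ^ 2) := by field_simp

theorem stmt13 (M L : ℝ) (hM : 0 < M) (hL : 0 < L) :
    ∃ M' > (0:ℝ), ∀ (ω : ℝ → ℝ) (φ : ℂ → ℂ), IsMajorant ω →
      (∀ δ : ℝ, 0 < δ → δ ≤ π → δ * ∫ t in δ..π, ω t / t ^ 2 ≤ M * ω δ) →
      ContinuousOn φ (sphere (0:ℂ) 1) →
      (∀ ξ₁ ∈ sphere (0:ℂ) 1, ∀ ξ₂ ∈ sphere (0:ℂ) 1,
        ‖φ ξ₁ - φ ξ₂‖ ≤ L * ω ‖ξ₁ - ξ₂‖) →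
      ∀ z ∈ ball (0:ℂ) 1, z ≠ 0 →
        ‖φ (z / (‖z‖ : ℂ)) - poissonC φ z‖ ≤ M' * ω (1 - ‖z‖) := by
  refine ⟨(2 / π + 2 * π * M) * L, by positivity, ?_⟩
  intro ω φ hω hdini hφ hmod z hz hz0
  rw [mem_ball_zero_iff] at hz
  set θ := Complex.arg z
  have hθ : (‖z‖ : ℂ) * Complex.exp (θ * Complex.I) = z := Complex.norm_mul_exp_arg_mul_I z
  have hζ : z / (‖z‖ : ℂ) = Complex.exp (θ * Complex.I) := by
    rw [div_eq_iff (by simpa using hz0), mul_comm, hθ]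
  have hg : Continuous fun τ : ℝ ↦
      L * ω ‖Complex.exp (θ * Complex.I) - Complex.exp (τ * Complex.I)‖ :=
    continuous_const.mul (hω.1.comp_continuous (by fun_prop) fun _ ↦ norm_nonneg _)
  have hperiodic : Function.Periodic (fun τ : ℝ ↦ diskPoissonKernel z τ *
      (L * ω ‖Complex.exp (θ * Complex.I) - Complex.exp (τ * Complex.I)‖)) (2 * π) :=
    periodic_exp_ofReal_mul_I.comp fun w ↦
      (1 - ‖z‖ ^ 2) / ‖w - z‖ ^ 2 * (L * ω ‖Complex.exp (θ * Complex.I) - w‖)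
  rw [hζ]
  calc ‖φ (Complex.exp (θ * Complex.I)) - poissonC φ z‖
      ≤ 1 / (2 * π) * ∫ τ in (0:ℝ)..2 * π, diskPoissonKernel z τ *
          (L * ω ‖Complex.exp (θ * Complex.I) - Complex.exp (τ * Complex.I)‖) :=
        norm_sub_poissonC_le hz hφ hg fun τ ↦ hmod _ (by simp) _ (by simp)
    _ ≤ 1 / (2 * π) * (4 * L * ω (1 - ‖z‖) + 4 * π ^ 2 * L * (M * ω (1 - ‖z‖))) := by
        have hδ : 0 < 1 - ‖z‖ := by linarith
        have hδπ : 1 - ‖z‖ ≤ π := by linarith [norm_nonneg z, pi_gt_three]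
        rw [hperiodic.intervalIntegral_eq_integral_comp_add θ]
        grw [integral_diskPoissonKernel_mul_majorant_le hω hL.le hz hθ, hdini _ hδ hδπ]
    _ = (2 / π + 2 * π * M) * L * ω (1 - ‖z‖) := by field_simp; ring
end

section
/- Let f be holomorphic on 𝔻 and continuous on the closed unit disk. For z ∈ 𝔻 define M_z = max{|f(w)| : |w - z| ≤ 1 - |z|}. Then for every z ∈ 𝔻, (1/2)(1 - |z|)|f'(z)| + |f(z)| ≤ M_z. -/
/-!
Let `M` be the supremum of `‖f‖` on `D_z`, a closed disk of radius `r = 1 - ‖z‖` around `z`.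
For `R > M` the Möbius map `w ↦ R (w - a) / (R² - ā w)`, with `a = f z`, sends the disk of
radius `R` into the unit disk and `a` to `0`, with derivative `R / (R² - |a|²)` at `a`.
The Schwarz lemma applied to its composition with `f` gives
`r R |f'(z)| ≤ R² - |a|² ≤ 2R (R - |a|)`, i.e. `r |f'(z)| / 2 + |a| ≤ R`; let `R ↓ M`.
-/

open Metric Set
open scoped ComplexConjugate

noncomputable def diskMoebius (R : ℝ) (a w : ℂ) : ℂ := R * (w - a) / (R ^ 2 - conj a * w)

theorem Complex.normSq_sq_sub_conj_mul (R : ℝ) (a b : ℂ) :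
    Complex.normSq (R ^ 2 - conj a * b) - R ^ 2 * Complex.normSq (b - a) =
      (R ^ 2 - Complex.normSq a) * (R ^ 2 - Complex.normSq b) := by
  apply Complex.ofReal_injective
  push_cast
  simp only [← Complex.mul_conj, map_sub, map_mul, map_pow, Complex.conj_conj,
    Complex.conj_ofReal]
  ring

theorem mul_norm_sub_le_norm_sq_sub_conj_mul {R : ℝ} {a b : ℂ} (ha : ‖a‖ ≤ R) (hb : ‖b‖ ≤ R) :
    R * ‖b - a‖ ≤ ‖(R : ℂ) ^ 2 - conj a * b‖ := by
  have hR : 0 ≤ R := (norm_nonneg a).trans ha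
  have key := Complex.normSq_sq_sub_conj_mul R a b
  simp only [Complex.normSq_eq_norm_sq] at key
  have hprod : 0 ≤ (R ^ 2 - ‖a‖ ^ 2) * (R ^ 2 - ‖b‖ ^ 2) := by
    apply mul_nonneg <;> nlinarith [norm_nonneg a, norm_nonneg b]
  refine (pow_le_pow_iff_left₀ (by positivity) (norm_nonneg _) two_ne_zero).1 ?_
  nlinarith

theorem sq_sub_conj_mul_ne_zero {R : ℝ} {a b : ℂ} (ha : ‖a‖ < R) (hb : ‖b‖ ≤ R) :
    (R : ℂ) ^ 2 - conj a * b ≠ 0 := by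
  have hR : 0 < R := (norm_nonneg a).trans_lt ha
  rw [← norm_pos_iff]
  calc (0 : ℝ) < R ^ 2 - ‖a‖ * ‖b‖ := by nlinarith [norm_nonneg a, norm_nonneg b]
    _ = ‖(R : ℂ) ^ 2‖ - ‖conj a * b‖ := by simp [abs_of_pos hR]
    _ ≤ ‖(R : ℂ) ^ 2 - conj a * b‖ := norm_sub_norm_le _ _

theorem norm_diskMoebius_le_one {R : ℝ} {a b : ℂ} (ha : ‖a‖ < R) (hb : ‖b‖ ≤ R) :
    ‖diskMoebius R a b‖ ≤ 1 := by
  have hR : 0 < R := (norm_nonneg a).trans_lt ha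
  rw [diskMoebius, norm_div, norm_mul, Complex.norm_real, Real.norm_of_nonneg hR.le,
    div_le_one (norm_pos_iff.2 (sq_sub_conj_mul_ne_zero ha hb))]
  exact mul_norm_sub_le_norm_sq_sub_conj_mul ha.le hb

theorem diskMoebius_self (R : ℝ) (a : ℂ) : diskMoebius R a a = 0 := by
  simp [diskMoebius]

theorem differentiableOn_diskMoebius {R : ℝ} {a : ℂ} (ha : ‖a‖ < R) :
    DifferentiableOn ℂ (diskMoebius R a) (closedBall 0 R) := by
  intro b hb
  have hb : ‖b‖ ≤ R := mem_closedBall_zero_iff.1 hb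
  exact ((((differentiableAt_id.sub_const a).const_mul _).div
    ((differentiableAt_const _).sub (differentiableAt_id.const_mul _))
    (sq_sub_conj_mul_ne_zero ha hb))).differentiableWithinAt

theorem hasDerivAt_diskMoebius {R : ℝ} {a : ℂ} (ha : ‖a‖ < R) :
    HasDerivAt (diskMoebius R a) ((R / (R ^ 2 - ‖a‖ ^ 2) : ℝ) : ℂ) a := by
  have hden := sq_sub_conj_mul_ne_zero ha ha.le
  have := (((hasDerivAt_id a).sub_const a).const_mul (R : ℂ)).div
    (((hasDerivAt_id a).const_mul (conj a)).const_sub ((R : ℂ) ^ 2)) hden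
  refine this.congr_deriv ?_
  rw [Complex.conj_mul'] at hden
  simp only [id, Complex.conj_mul', sub_self, mul_zero, zero_mul, sub_zero, mul_one]
  push_cast
  field_simp

theorem mul_mul_norm_deriv_le_sq_sub_sq_of_mapsTo {g : ℂ → ℂ} {c : ℂ} {r R : ℝ}
    (hg : DifferentiableOn ℂ g (ball c r)) (h_maps : MapsTo g (ball c r) (closedBall 0 R))
    (hr : 0 < r) (hgc : ‖g c‖ < R) :
    r * R * ‖deriv g c‖ ≤ R ^ 2 - ‖g c‖ ^ 2 := by
  have hR : 0 < R := (norm_nonneg _).trans_lt hgc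
  have hden : 0 < R ^ 2 - ‖g c‖ ^ 2 := by nlinarith [norm_nonneg (g c)]
  set φ := diskMoebius R (g c) ∘ g
  have hφ : DifferentiableOn ℂ φ (ball c r) := (differentiableOn_diskMoebius hgc).comp hg h_maps
  have hφ_maps : MapsTo φ (ball c r) (closedBall (φ c) 1) := fun w hw => by
    simpa [φ, diskMoebius_self] using
      norm_diskMoebius_le_one hgc (mem_closedBall_zero_iff.1 (h_maps hw))
  have hschwarz : ‖deriv φ c‖ ≤ 1 / r := Complex.norm_deriv_le_div_of_mapsTo_ball hφ hφ_maps hr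
  have hg' : HasDerivAt g (deriv g c) c :=
    (hg.differentiableAt (isOpen_ball.mem_nhds (mem_ball_self hr))).hasDerivAt
  rw [((hasDerivAt_diskMoebius hgc).comp c hg').deriv, norm_mul, Complex.norm_real,
    Real.norm_of_nonneg (by positivity), div_mul_eq_mul_div, div_le_div_iff₀ hden hr] at hschwarz
  linarith

theorem half_mul_norm_deriv_add_norm_le_of_mapsTo {g : ℂ → ℂ} {c : ℂ} {r R : ℝ}
    (hg : DifferentiableOn ℂ g (ball c r)) (h_maps : MapsTo g (ball c r) (closedBall 0 R))
    (hr : 0 < r) :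
    r / 2 * ‖deriv g c‖ + ‖g c‖ ≤ R := by
  have hgc : ‖g c‖ ≤ R := mem_closedBall_zero_iff.1 (h_maps (mem_ball_self hr))
  -- enlarging `R` keeps `g c` off the boundary circle, where the Möbius map degenerates
  refine le_of_forall_gt fun R' hR' => ?_
  have hgc' : ‖g c‖ < R' := hgc.trans_lt hR'
  have hR'pos : 0 < R' := (norm_nonneg _).trans_lt hgc'
  have h := mul_mul_norm_deriv_le_sq_sub_sq_of_mapsTo hg
    (h_maps.mono_right (closedBall_subset_closedBall hR'.le)) hr hgc'
  have hmul : R' * (r * ‖deriv g c‖) < R' * (2 * (R' - ‖g c‖)) := by nlinarith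
  linarith [lt_of_mul_lt_mul_left hmul hR'pos.le]

theorem stmt15 (f : ℂ → ℂ)
    (hf : DifferentiableOn ℂ f (ball (0:ℂ) 1))
    (hc : ContinuousOn f (closedBall (0:ℂ) 1))
    (z : ℂ) (hz : z ∈ ball (0:ℂ) 1) :
    (1 / 2) * (1 - ‖z‖) * ‖deriv f z‖ + ‖f z‖ ≤
      sSup ((fun w => ‖f w‖) '' closedBall z (1 - ‖z‖)) := by
  have hr : 0 < 1 - ‖z‖ := sub_pos.2 (mem_ball_zero_iff.1 hz)
  have hdist : 1 - ‖z‖ + dist z 0 = 1 := by rw [dist_zero_right]; ring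
  have hbdd : BddAbove ((fun w => ‖f w‖) '' closedBall z (1 - ‖z‖)) :=
    ((isCompact_closedBall z _).image_of_continuousOn
      (hc.mono (closedBall_subset_closedBall' hdist.le)).norm).bddAbove
  have h_maps : MapsTo f (ball z (1 - ‖z‖))
      (closedBall 0 (sSup ((fun w => ‖f w‖) '' closedBall z (1 - ‖z‖)))) := fun w hw =>
    mem_closedBall_zero_iff.2 (le_csSup hbdd (mem_image_of_mem _ (ball_subset_closedBall hw)))
  linarith [half_mul_norm_deriv_add_norm_le_of_mapsTo (hf.mono (ball_subset_ball' hdist.le)) h_maps hr]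
end
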